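/- For generic A, Z₁,…,Z₅ ∈ ℝ⁴ (all brackets below nonzero), the sum of the three residue terms ⟨5123⟩⟨4512⟩⟨1234⟩/(⟨A145⟩⟨A512⟩⟨A123⟩⟨A234⟩) − ⟨5124⟩²⟨2345⟩/(⟨A145⟩⟨A512⟩⟨A234⟩⟨A245⟩) + ⟨1234⟩²⟨1345⟩/(⟨A134⟩⟨A145⟩⟨A123⟩⟨A234⟩) equals the canonical form of the cyclic polytope with vertices Z₂, Z₃, Z₄, Z₅, −Z₁, namely the sum [2,3,4,−1] + [2,4,5,−1], where [a,b,c,d] := ⟨abcd⟩³/(⟨Aabc⟩⟨Abcd⟩⟨Acda⟩⟨Adab⟩) and −1 denotes the vector −Z₁. -/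

import Mathlib

noncomputable def det4 (x y z w : Fin 4 → ℝ) : ℝ := Matrix.det (Matrix.of ![x, y, z, w])

noncomputable def tet (A a b c d : Fin 4 → ℝ) : ℝ :=
  (det4 a b c d)^3 / (det4 A a b c * det4 A b c d * det4 A c d a * det4 A d a b)

/-!
Each canonical form `[a,b,c,d]` is homogeneous of degree zero in every vertex, so `-Z₁` may be
replaced by `Z₁`. After sorting all brackets, both sides are rational functions of the seven
brackets `⟨A i j k⟩` and the five brackets `⟨i j k l⟩`, and over the common denominator their
numerators agree modulo the three Cramer relations `∑ ± ⟨A p q i⟩⟨1…î…5⟩ = 0` attached to the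
lines `(p q) = (1 2), (1 4), (2 4)`.
-/

lemma det4_expand (x y z w : Fin 4 → ℝ) : det4 x y z w =
    x 0 * (y 1 * (z 2 * w 3 - z 3 * w 2) - y 2 * (z 1 * w 3 - z 3 * w 1) + y 3 * (z 1 * w 2 - z 2 * w 1))
  - x 1 * (y 0 * (z 2 * w 3 - z 3 * w 2) - y 2 * (z 0 * w 3 - z 3 * w 0) + y 3 * (z 0 * w 2 - z 2 * w 0))
  + x 2 * (y 0 * (z 1 * w 3 - z 3 * w 1) - y 1 * (z 0 * w 3 - z 3 * w 0) + y 3 * (z 0 * w 1 - z 1 * w 0))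
  - x 3 * (y 0 * (z 1 * w 2 - z 2 * w 1) - y 1 * (z 0 * w 2 - z 2 * w 0) + y 2 * (z 0 * w 1 - z 1 * w 0)) := by
  simp [det4, Matrix.det_succ_row_zero, Fin.sum_univ_succ, Fin.succAbove]
  ring

lemma det4_rotate (x y z w : Fin 4 → ℝ) : det4 x y z w = -det4 y z w x := by
  simp only [det4_expand]; ring

lemma det4_rotate_tail (a x y z : Fin 4 → ℝ) : det4 a x y z = det4 a y z x := by
  simp only [det4_expand]; ring

lemma det4_swap_last (x y z w : Fin 4 → ℝ) : det4 x y z w = -det4 x y w z := by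
  simp only [det4_expand]; ring

lemma det4_same_second_fourth (x y z : Fin 4 → ℝ) : det4 x y z y = 0 :=
  Matrix.det_zero_of_row_eq (i := 1) (j := 3) (by decide) rfl

lemma det4_same_third_fourth (x y z : Fin 4 → ℝ) : det4 x y z z = 0 :=
  Matrix.det_zero_of_row_eq (i := 2) (j := 3) (by decide) rfl

lemma det4_smul_second (t : ℝ) (x y z w : Fin 4 → ℝ) : det4 x (t • y) z w = t * det4 x y z w := by
  simp only [det4_expand, Pi.smul_apply, smul_eq_mul]; ring

lemma det4_smul_third (t : ℝ) (x y z w : Fin 4 → ℝ) : det4 x y (t • z) w = t * det4 x y z w := by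
  simp only [det4_expand, Pi.smul_apply, smul_eq_mul]; ring

lemma det4_smul_fourth (t : ℝ) (x y z w : Fin 4 → ℝ) : det4 x y z (t • w) = t * det4 x y z w := by
  simp only [det4_expand, Pi.smul_apply, smul_eq_mul]; ring

lemma det4_cramer (x y z v₁ v₂ v₃ v₄ v₅ : Fin 4 → ℝ) :
    det4 x y z v₁ * det4 v₂ v₃ v₄ v₅ - det4 x y z v₂ * det4 v₁ v₃ v₄ v₅
      + det4 x y z v₃ * det4 v₁ v₂ v₄ v₅ - det4 x y z v₄ * det4 v₁ v₂ v₃ v₅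
      + det4 x y z v₅ * det4 v₁ v₂ v₃ v₄ = 0 := by
  simp only [det4_expand]; ring

lemma tet_smul_fourth {t : ℝ} (ht : t ≠ 0) (A a b c d : Fin 4 → ℝ) :
    tet A a b c (t • d) = tet A a b c d := by
  simp only [tet, det4_smul_second, det4_smul_third, det4_smul_fourth]
  calc _ = t ^ 3 * det4 a b c d ^ 3
        / (t ^ 3 * (det4 A a b c * det4 A b c d * det4 A c d a * det4 A d a b)) := by ring
    _ = _ := mul_div_mul_left _ _ (pow_ne_zero 3 ht)

section FivePoints

variable (A Z₁ Z₂ Z₃ Z₄ Z₅ : Fin 4 → ℝ)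

lemma det4_cramer_12 :
    det4 A Z₁ Z₂ Z₃ * det4 Z₁ Z₂ Z₄ Z₅ - det4 A Z₁ Z₂ Z₄ * det4 Z₁ Z₂ Z₃ Z₅
      + det4 A Z₁ Z₂ Z₅ * det4 Z₁ Z₂ Z₃ Z₄ = 0 := by
  have h := det4_cramer A Z₁ Z₂ Z₁ Z₂ Z₃ Z₄ Z₅
  rw [det4_same_second_fourth, det4_same_third_fourth] at h
  linear_combination h

lemma det4_cramer_14 :
    det4 A Z₁ Z₂ Z₄ * det4 Z₁ Z₃ Z₄ Z₅ - det4 A Z₁ Z₃ Z₄ * det4 Z₁ Z₂ Z₄ Z₅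
      + det4 A Z₁ Z₄ Z₅ * det4 Z₁ Z₂ Z₃ Z₄ = 0 := by
  have h := det4_cramer A Z₁ Z₄ Z₁ Z₂ Z₃ Z₄ Z₅
  rw [det4_same_second_fourth, det4_same_third_fourth, det4_swap_last A Z₁ Z₄ Z₂,
    det4_swap_last A Z₁ Z₄ Z₃] at h
  linear_combination h

lemma det4_cramer_24 :
    det4 A Z₁ Z₂ Z₄ * det4 Z₂ Z₃ Z₄ Z₅ - det4 A Z₂ Z₃ Z₄ * det4 Z₁ Z₂ Z₄ Z₅
      + det4 A Z₂ Z₄ Z₅ * det4 Z₁ Z₂ Z₃ Z₄ = 0 := by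
  have h := det4_cramer A Z₂ Z₄ Z₁ Z₂ Z₃ Z₄ Z₅
  rw [det4_same_second_fourth, det4_same_third_fourth, det4_swap_last A Z₂ Z₄ Z₃,
    ← det4_rotate_tail A Z₁ Z₂ Z₄] at h
  linear_combination h

end FivePoints

/-- Here `aijk` stands for `⟨A i j k⟩` and `bijkl` for `⟨i j k l⟩`. -/
theorem residue_sum_eq_of_cramer {K : Type*} [Field K]
    {a123 a124 a125 a134 a145 a234 a245 b1234 b1235 b1245 b1345 b2345 : K}
    (r12 : a123 * b1245 - a124 * b1235 + a125 * b1234 = 0)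
    (r14 : a124 * b1345 - a134 * b1245 + a145 * b1234 = 0)
    (r24 : a124 * b2345 - a234 * b1245 + a245 * b1234 = 0)
    (h123 : a123 ≠ 0) (h124 : a124 ≠ 0) (h125 : a125 ≠ 0) (h134 : a134 ≠ 0) (h145 : a145 ≠ 0)
    (h234 : a234 ≠ 0) (h245 : a245 ≠ 0) :
    -b1235 * b1245 * b1234 / (a145 * a125 * a123 * a234)
      - b1245 ^ 2 * b2345 / (a145 * a125 * a234 * a245)
      + b1234 ^ 2 * b1345 / (a134 * a145 * a123 * a234)
    = -b1234 ^ 3 / (a234 * a134 * a124 * a123) - b1245 ^ 3 / (a245 * a145 * a125 * a124) := by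
  field_simp
  linear_combination (a145 * a245 * b1234 ^ 2 + a124 * a245 * b1234 * b1345) * r12
    + (a124 * a245 * b1234 * b1235 - a123 * a245 * b1234 * b1245) * r14
    - (a123 * a134 * b1245 ^ 2) * r24

theorem five_point_cyclic_polytope_triangulation_general (A Z₁ Z₂ Z₃ Z₄ Z₅ : Fin 4 → ℝ)
    (h1 : det4 A Z₁ Z₄ Z₅ ≠ 0) (h2 : det4 A Z₅ Z₁ Z₂ ≠ 0) (h3 : det4 A Z₁ Z₂ Z₃ ≠ 0)
    (h4 : det4 A Z₂ Z₃ Z₄ ≠ 0) (h5 : det4 A Z₂ Z₄ Z₅ ≠ 0) (h6 : det4 A Z₁ Z₃ Z₄ ≠ 0)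
    (h12 : det4 A Z₂ Z₄ (-Z₁) ≠ 0) :
    det4 Z₅ Z₁ Z₂ Z₃ * det4 Z₄ Z₅ Z₁ Z₂ * det4 Z₁ Z₂ Z₃ Z₄ /
        (det4 A Z₁ Z₄ Z₅ * det4 A Z₅ Z₁ Z₂ * det4 A Z₁ Z₂ Z₃ * det4 A Z₂ Z₃ Z₄)
    - (det4 Z₅ Z₁ Z₂ Z₄)^2 * det4 Z₂ Z₃ Z₄ Z₅ /
        (det4 A Z₁ Z₄ Z₅ * det4 A Z₅ Z₁ Z₂ * det4 A Z₂ Z₃ Z₄ * det4 A Z₂ Z₄ Z₅)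
    + (det4 Z₁ Z₂ Z₃ Z₄)^2 * det4 Z₁ Z₃ Z₄ Z₅ /
        (det4 A Z₁ Z₃ Z₄ * det4 A Z₁ Z₄ Z₅ * det4 A Z₁ Z₂ Z₃ * det4 A Z₂ Z₃ Z₄)
    = tet A Z₂ Z₃ Z₄ (-Z₁) + tet A Z₂ Z₄ Z₅ (-Z₁) := by
  have h124 : det4 A Z₁ Z₂ Z₄ ≠ 0 := by
    rwa [← neg_one_smul ℝ Z₁, det4_smul_fourth, neg_one_mul, neg_ne_zero,
      ← det4_rotate_tail] at h12
  rw [det4_rotate_tail A Z₅ Z₁ Z₂] at h2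
  rw [← neg_one_smul ℝ Z₁, tet_smul_fourth (by norm_num), tet_smul_fourth (by norm_num), tet, tet]
  rw [det4_rotate Z₅ Z₁ Z₂ Z₃, det4_rotate Z₄ Z₅ Z₁ Z₂, det4_rotate Z₅ Z₁ Z₂ Z₄,
    neg_eq_iff_eq_neg.mp (det4_rotate Z₁ Z₂ Z₃ Z₄).symm,
    neg_eq_iff_eq_neg.mp (det4_rotate Z₁ Z₂ Z₄ Z₅).symm,
    det4_rotate_tail A Z₅ Z₁ Z₂, det4_rotate_tail A Z₄ Z₁ Z₂,
    ← det4_rotate_tail A Z₁ Z₃ Z₄, ← det4_rotate_tail A Z₁ Z₄ Z₅]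
  linear_combination residue_sum_eq_of_cramer (det4_cramer_12 A Z₁ Z₂ Z₃ Z₄ Z₅)
    (det4_cramer_14 A Z₁ Z₂ Z₃ Z₄ Z₅) (det4_cramer_24 A Z₁ Z₂ Z₃ Z₄ Z₅) h3 h124 h2 h6 h1 h4 h5

theorem five_point_cyclic_polytope_triangulation (A Z₁ Z₂ Z₃ Z₄ Z₅ : Fin 4 → ℝ)
    (h1 : det4 A Z₁ Z₄ Z₅ ≠ 0) (h2 : det4 A Z₅ Z₁ Z₂ ≠ 0) (h3 : det4 A Z₁ Z₂ Z₃ ≠ 0)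
    (h4 : det4 A Z₂ Z₃ Z₄ ≠ 0) (h5 : det4 A Z₂ Z₄ Z₅ ≠ 0) (h6 : det4 A Z₁ Z₃ Z₄ ≠ 0)
    (h7 : det4 A Z₃ Z₄ (-Z₁) ≠ 0) (h8 : det4 A Z₄ (-Z₁) Z₂ ≠ 0)
    (h9 : det4 A Z₄ Z₅ (-Z₁) ≠ 0) (h10 : det4 A Z₅ (-Z₁) Z₂ ≠ 0)
    (h11 : det4 A Z₂ Z₃ (-Z₁) ≠ 0) (h12 : det4 A Z₂ Z₄ (-Z₁) ≠ 0) :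
    det4 Z₅ Z₁ Z₂ Z₃ * det4 Z₄ Z₅ Z₁ Z₂ * det4 Z₁ Z₂ Z₃ Z₄ /
        (det4 A Z₁ Z₄ Z₅ * det4 A Z₅ Z₁ Z₂ * det4 A Z₁ Z₂ Z₃ * det4 A Z₂ Z₃ Z₄)
    - (det4 Z₅ Z₁ Z₂ Z₄)^2 * det4 Z₂ Z₃ Z₄ Z₅ /
        (det4 A Z₁ Z₄ Z₅ * det4 A Z₅ Z₁ Z₂ * det4 A Z₂ Z₃ Z₄ * det4 A Z₂ Z₄ Z₅)
    + (det4 Z₁ Z₂ Z₃ Z₄)^2 * det4 Z₁ Z₃ Z₄ Z₅ /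
        (det4 A Z₁ Z₃ Z₄ * det4 A Z₁ Z₄ Z₅ * det4 A Z₁ Z₂ Z₃ * det4 A Z₂ Z₃ Z₄)
    = tet A Z₂ Z₃ Z₄ (-Z₁) + tet A Z₂ Z₄ Z₅ (-Z₁) :=
  five_point_cyclic_polytope_triangulation_general A Z₁ Z₂ Z₃ Z₄ Z₅ h1 h2 h3 h4 h5 h6 h12
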